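/- arXiv:2308.13909 — 5 statements merged into one kernel-verified Lean document; each statement's English description precedes it below -/
import Mathlib

section
/- (Dilation equals retrodiction, classical case) Let φ(a'|a) = Σ_{b,b'} Φ(a',b'|a,b) β(b|a) be a dilation of the classical channel φ, let γ be a prior on A with Γ(a,b) = γ(a)β(b|a), and define \hat{Φ}_Γ by Bayes' rule on P(a,b,a',b') = Φ(a',b'|a,b)Γ(a,b). Then the channel obtained by appending the environment, reversing the dilated map with Bayes' rule, and marginalizing the environment equals the direct Bayesian reverse of φ with prior γ: Σ_{b,b'} \hat{Φ}_Γ(a,b|a',b') η(b'|a') = \hat{φ}_γ(a|a'), where η = Φ[Γ], assuming all required marginals are strictly positive. -/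
/-!
Since `Γ(a,b) = γ(a) β(b|a)`, the joint weight `Φ(a',b'|a,b) Γ(a,b)` summed over both
environments is `φ(a'|a) γ(a)`, and summed over everything but `a'` it is the output
marginal `Σ_{b'} η(a',b')`. In the composite, the factor `η(a',b')` of the Bayes
denominator cancels against the numerator of `η(b'|a')`, so what is left is exactly
this ratio of marginals.
-/

open Finset

lemma sum_sum_dilation_mul_prior_eq {A B : Type*} [Fintype B]
    (Φ : A × B → A × B → ℝ) (β : A → B → ℝ) (γ : A → ℝ)
    (φ : A → A → ℝ) (hφ : ∀ a' a, φ a' a = ∑ b, ∑ b', Φ (a', b') (a, b) * β a b)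
    (Γ : A × B → ℝ) (hΓ : ∀ a b, Γ (a, b) = γ a * β a b) (a' a : A) :
    ∑ b, ∑ b', Φ (a', b') (a, b) * Γ (a, b) = φ a' a * γ a := by
  simp only [hφ, hΓ, sum_mul]
  exact sum_congr rfl fun b _ => sum_congr rfl fun b' _ => by ring

lemma sum_snd_propagate_eq {A B : Type*} [Fintype A] [Fintype B]
    (Φ : A × B → A × B → ℝ) (Γ : A × B → ℝ) (η : A × B → ℝ)
    (hη : ∀ x, η x = ∑ y, Φ x y * Γ y) (a' : A) :
    ∑ b', η (a', b') = ∑ a, ∑ b, ∑ b', Φ (a', b') (a, b) * Γ (a, b) := by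
  simp only [hη, Fintype.sum_prod_type]
  rw [sum_comm]
  exact sum_congr rfl fun a _ => sum_comm

theorem dilation_retrodiction_classical_general
    {A B : Type*} [Fintype A] [Fintype B]
    (Φ : (A × B) → (A × B) → ℝ)  -- Φ (a',b') (a,b) = Φ(a',b'|a,b)
    (β : A → B → ℝ)              -- β a b = β(b|a)
    (γ : A → ℝ)
    -- the induced channel on the system:
    (φ : A → A → ℝ) (hφ : ∀ a' a, φ a' a = ∑ b, ∑ b', Φ (a', b') (a, b) * β a b)
    -- the total prior and the propagated joint output:
    (Γ : A × B → ℝ) (hΓ : ∀ a b, Γ (a, b) = γ a * β a b)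
    (η : A × B → ℝ) (hη : ∀ x, η x = ∑ y, Φ x y * Γ y)
    -- strict positivity of all required marginals:
    (hηpos : ∀ x, 0 < η x) :
    ∀ a a', (∑ b, ∑ b',
        -- Bayesian reverse of the dilated map: \hat{Φ}_Γ(a,b|a',b')
        (Φ (a', b') (a, b) * Γ (a, b) / η (a', b'))
        -- conditional distribution of the output environment: η(b'|a')
        * (η (a', b') / ∑ b'', η (a', b'')))
      = φ a' a * γ a / ∑ a2, φ a' a2 * γ a2 := by
  intro a a'
  have hjoint := sum_sum_dilation_mul_prior_eq Φ β γ φ hφ Γ hΓ a'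
  have hmarginal : ∑ b'', η (a', b'') = ∑ a2, φ a' a2 * γ a2 := by
    rw [sum_snd_propagate_eq Φ Γ η hη a']
    exact sum_congr rfl fun a2 _ => hjoint a2
  calc ∑ b, ∑ b', Φ (a', b') (a, b) * Γ (a, b) / η (a', b')
          * (η (a', b') / ∑ b'', η (a', b''))
      = (∑ b, ∑ b', Φ (a', b') (a, b) * Γ (a, b)) / ∑ b'', η (a', b'') := by
        simp only [sum_div]
        exact sum_congr rfl fun b _ => sum_congr rfl fun b' _ =>
          div_mul_div_cancel₀ (hηpos (a', b')).ne'
    _ = φ a' a * γ a / ∑ a2, φ a' a2 * γ a2 := by rw [hjoint, hmarginal]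

/-- Dilation equals retrodiction, classical case. Let
`φ(a'|a) = Σ_{b,b'} Φ(a',b'|a,b) β(b|a)` be a dilation of the classical channel `φ`,
`Γ(a,b) = γ(a)β(b|a)` the total prior, `η = Φ[Γ]` the propagated joint output, and
`\hat{Φ}_Γ` the Bayesian reverse of the dilated map.  Then appending the environment
with the conditional `η(b'|a')`, applying `\hat{Φ}_Γ`, and marginalizing the
environment yields exactly the direct Bayesian reverse `\hat{φ}_γ(a|a')`. -/
theorem dilation_retrodiction_classical
    {A B : Type*} [Fintype A] [Fintype B]
    (Φ : (A × B) → (A × B) → ℝ)  -- Φ (a',b') (a,b) = Φ(a',b'|a,b)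
    (β : A → B → ℝ)              -- β a b = β(b|a)
    (γ : A → ℝ)
    (hΦ0 : ∀ x y, 0 ≤ Φ x y) (hΦ1 : ∀ y, ∑ x, Φ x y = 1)
    (hβ0 : ∀ a b, 0 ≤ β a b) (hβ1 : ∀ a, ∑ b, β a b = 1)
    (hγ0 : ∀ a, 0 ≤ γ a) (hγ1 : ∑ a, γ a = 1)
    -- the induced channel on the system:
    (φ : A → A → ℝ) (hφ : ∀ a' a, φ a' a = ∑ b, ∑ b', Φ (a', b') (a, b) * β a b)
    -- the total prior and the propagated joint output:
    (Γ : A × B → ℝ) (hΓ : ∀ a b, Γ (a, b) = γ a * β a b)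
    (η : A × B → ℝ) (hη : ∀ x, η x = ∑ y, Φ x y * Γ y)
    -- strict positivity of all required marginals:
    (hηpos : ∀ x, 0 < η x) :
    ∀ a a', (∑ b, ∑ b',
        -- Bayesian reverse of the dilated map: \hat{Φ}_Γ(a,b|a',b')
        (Φ (a', b') (a, b) * Γ (a, b) / η (a', b'))
        -- conditional distribution of the output environment: η(b'|a')
        * (η (a', b') / ∑ b'', η (a', b'')))
      = φ a' a * γ a / ∑ a2, φ a' a2 * γ a2 :=
  dilation_retrodiction_classical_general Φ β γ φ hφ Γ hΓ η hη hηpos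
end

section
/- If U is a unitary with U(H_A⊗𝟙 + 𝟙⊗H_B)U† = H_A'⊗𝟙 + 𝟙⊗H_B' (generalized thermal), then for every real κ, U (τ_κ(H_A) ⊗ τ_κ(H_B)) U† = τ_κ(H_A') ⊗ τ_κ(H_B'), where τ_κ(H) = e^{κH}/Tr(e^{κH}). In particular (U, τ_κ(H_A), τ_κ(H_B)) is product-preserving. -/
open Matrix Kronecker

/-- The Gibbs state `τ_κ(H) = e^{κH}/Tr(e^{κH})`. -/
noncomputable def gibbs {n : Type*} [Fintype n] [DecidableEq n]
    (κ : ℝ) (H : Matrix n n ℂ) : Matrix n n ℂ :=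
  (Matrix.trace (NormedSpace.exp ((κ : ℂ) • H)))⁻¹ • NormedSpace.exp ((κ : ℂ) • H)

/-!
Since `A ⊗ₖ 1` and `1 ⊗ₖ B` commute, `exp (κ (A ⊗ₖ 1 + 1 ⊗ₖ B)) = exp (κ A) ⊗ₖ exp (κ B)`, and the
trace of a Kronecker product is the product of the traces; hence
`τ_κ(A) ⊗ₖ τ_κ(B) = τ_κ(A ⊗ₖ 1 + 1 ⊗ₖ B)`. Gibbs states are covariant under unitary conjugation,
because `exp` commutes with conjugation and the trace is conjugation invariant, so conjugating by
`U` carries the Gibbs state of `H_A ⊗ 1 + 1 ⊗ H_B` to that of `H_A' ⊗ 1 + 1 ⊗ H_B'`.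
-/

namespace Matrix

variable {R n m p : Type*} [Fintype n] [DecidableEq n] [Fintype m] [DecidableEq m]
  [Fintype p] [DecidableEq p]

section CommSemiring

variable [CommSemiring R]

variable (m) in
def kroneckerOneRingHom : Matrix n n R →+* Matrix (n × m) (n × m) R where
  toFun A := A ⊗ₖ (1 : Matrix m m R)
  map_one' := one_kronecker_one
  map_mul' A B := by rw [← mul_kronecker_mul, one_mul]
  map_zero' := zero_kronecker _
  map_add' A B := add_kronecker A B 1

variable (n) in
def oneKroneckerRingHom : Matrix m m R →+* Matrix (n × m) (n × m) R where
  toFun B := (1 : Matrix n n R) ⊗ₖ B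
  map_one' := one_kronecker_one
  map_mul' A B := by rw [← mul_kronecker_mul, one_mul]
  map_zero' := kronecker_zero _
  map_add' A B := kronecker_add 1 A B

theorem commute_kronecker_one_one_kronecker (A : Matrix n n R) (B : Matrix m m R) :
    Commute (A ⊗ₖ (1 : Matrix m m R)) ((1 : Matrix n n R) ⊗ₖ B) := by
  simp only [Commute, SemiconjBy, ← mul_kronecker_mul, one_mul, mul_one]

end CommSemiring

theorem trace_unitary_conj [CommRing R] [StarRing R] {U : Matrix n n R}
    (hU : U ∈ unitaryGroup n R) (A : Matrix n n R) : trace (U * A * Uᴴ) = trace A := by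
  rw [trace_mul_cycle, ← star_eq_conjTranspose, mem_unitaryGroup_iff'.mp hU, one_mul]

section Normed

variable [NormedCommRing R] [NormedAlgebra ℚ R] [CompleteSpace R]

open NormedSpace (exp)

theorem map_exp (f : Matrix n n R →+* Matrix p p R) (hf : Continuous f) (A : Matrix n n R) :
    f (exp A) = exp (f A) := by
  -- instance search misses completeness for the operator-norm uniformity, which is only
  -- definitionally equal to the product one
  have hcomplete : CompleteSpace (Matrix n n R) := inferInstance
  open scoped Norms.Operator in exact @NormedSpace.map_exp _ _ _ _ hcomplete _ _ _ _ _ f hf A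

theorem exp_kronecker_one (A : Matrix n n R) :
    exp (A ⊗ₖ (1 : Matrix m m R)) = exp A ⊗ₖ (1 : Matrix m m R) :=
  (map_exp (kroneckerOneRingHom m) (continuous_pi fun _ => continuous_pi fun _ =>
    (continuous_id.matrix_elem _ _).mul continuous_const) A).symm

theorem exp_one_kronecker (B : Matrix m m R) :
    exp ((1 : Matrix n n R) ⊗ₖ B) = (1 : Matrix n n R) ⊗ₖ exp B :=
  (map_exp (oneKroneckerRingHom n) (continuous_pi fun _ => continuous_pi fun _ =>
    continuous_const.mul (continuous_id.matrix_elem _ _)) B).symm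

theorem exp_kronecker_one_add_one_kronecker (A : Matrix n n R) (B : Matrix m m R) :
    exp (A ⊗ₖ (1 : Matrix m m R) + (1 : Matrix n n R) ⊗ₖ B) = exp A ⊗ₖ exp B := by
  rw [exp_add_of_commute _ _ (commute_kronecker_one_one_kronecker A B), exp_kronecker_one,
    exp_one_kronecker, ← mul_kronecker_mul, mul_one, one_mul]

theorem exp_unitary_conj [StarRing R] {U : Matrix n n R} (hU : U ∈ unitaryGroup n R)
    (A : Matrix n n R) : exp (U * A * Uᴴ) = U * exp A * Uᴴ :=
  exp_units_conj (Unitary.toUnits ⟨U, hU⟩) A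

end Normed

end Matrix

section Gibbs

variable {n m : Type*} [Fintype n] [DecidableEq n] [Fintype m] [DecidableEq m]

theorem gibbs_unitary_conj {U : Matrix n n ℂ} (hU : U ∈ unitaryGroup n ℂ) (κ : ℝ)
    (H : Matrix n n ℂ) : gibbs κ (U * H * Uᴴ) = U * gibbs κ H * Uᴴ := by
  have hsmul : (κ : ℂ) • (U * H * Uᴴ) = U * ((κ : ℂ) • H) * Uᴴ := by
    rw [Matrix.mul_smul, Matrix.smul_mul]
  rw [gibbs, gibbs, hsmul, exp_unitary_conj hU, trace_unitary_conj hU, Matrix.mul_smul,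
    Matrix.smul_mul]

theorem gibbs_kronecker (κ : ℝ) (A : Matrix n n ℂ) (B : Matrix m m ℂ) :
    gibbs κ A ⊗ₖ gibbs κ B = gibbs κ (A ⊗ₖ (1 : Matrix m m ℂ) + (1 : Matrix n n ℂ) ⊗ₖ B) := by
  rw [gibbs, gibbs, gibbs, smul_add, ← smul_kronecker, ← kronecker_smul,
    exp_kronecker_one_add_one_kronecker, trace_kronecker, mul_inv, smul_kronecker,
    kronecker_smul, smul_smul, mul_comm]

end Gibbs

theorem generalizedThermal_product_preserving_general
    {n m : Type*} [Fintype n] [DecidableEq n]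
    [Fintype m] [DecidableEq m]
    (U : Matrix (n × m) (n × m) ℂ) (hU : U ∈ Matrix.unitaryGroup (n × m) ℂ)
    (HA HA' : Matrix n n ℂ) (HB HB' : Matrix m m ℂ)
    (hGT : U * (HA ⊗ₖ (1 : Matrix m m ℂ) + (1 : Matrix n n ℂ) ⊗ₖ HB) * Uᴴ
      = HA' ⊗ₖ (1 : Matrix m m ℂ) + (1 : Matrix n n ℂ) ⊗ₖ HB') :
    ∀ κ : ℝ, U * (gibbs κ HA ⊗ₖ gibbs κ HB) * Uᴴ = gibbs κ HA' ⊗ₖ gibbs κ HB' := by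
  intro κ
  rw [gibbs_kronecker, gibbs_kronecker, ← hGT, gibbs_unitary_conj hU]

/-- If `U` is a generalized thermal unitary, i.e.
`U(H_A⊗𝟙 + 𝟙⊗H_B)U† = H_A'⊗𝟙 + 𝟙⊗H_B'`, then for every real `κ`,
`U (τ_κ(H_A) ⊗ τ_κ(H_B)) U† = τ_κ(H_A') ⊗ τ_κ(H_B')`; in particular
`(U, τ_κ(H_A), τ_κ(H_B))` is a product-preserving tuple. -/
theorem generalizedThermal_product_preserving
    {n m : Type*} [Fintype n] [DecidableEq n] [Nonempty n]
    [Fintype m] [DecidableEq m] [Nonempty m]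
    (U : Matrix (n × m) (n × m) ℂ) (hU : U ∈ Matrix.unitaryGroup (n × m) ℂ)
    (HA HA' : Matrix n n ℂ) (HB HB' : Matrix m m ℂ)
    (hHA : HA.IsHermitian) (hHB : HB.IsHermitian)
    (hHA' : HA'.IsHermitian) (hHB' : HB'.IsHermitian)
    (hGT : U * (HA ⊗ₖ (1 : Matrix m m ℂ) + (1 : Matrix n n ℂ) ⊗ₖ HB) * Uᴴ
      = HA' ⊗ₖ (1 : Matrix m m ℂ) + (1 : Matrix n n ℂ) ⊗ₖ HB') :
    ∀ κ : ℝ, U * (gibbs κ HA ⊗ₖ gibbs κ HB) * Uᴴ = gibbs κ HA' ⊗ₖ gibbs κ HB' :=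
  generalizedThermal_product_preserving_general U hU HA HA' HB HB' hGT
end

section
/- (Product-preservation implies tabletop reversibility) Let U be a unitary on H_A ⊗ H_B, α a full-rank density operator on H_A and β a density operator on H_B such that U(α⊗β)U† = α'⊗β' with α' full rank. Define the channel E[ρ] = Tr_B[U(ρ⊗β)U†]. Then the Petz recovery map of E with reference α equals ρ ↦ Tr_B[U†(ρ⊗β')U]. -/
/-!
Unitary conjugation commutes with the matrix square root, and `√(α ⊗ β) = √α ⊗ √β`, so
`U (α ⊗ β) U† = α' ⊗ β'` forces `U (√α ⊗ √β) = (√α' ⊗ √β') U`. In the Petz map the outer `√α`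
can be moved into the partial trace as `√α ⊗ 𝟙`, where it joins `𝟙 ⊗ √β`; pushing `√α ⊗ √β`
through `U` turns it into `√α' ⊗ √β'`, which cancels `(α')^{-1/2}` and assembles `β'`.
-/

open Matrix Kronecker ComplexOrder

/-- The partial trace over the second (environment) factor. -/
noncomputable def trB {n m : Type*} [Fintype n] [Fintype m]
    (M : Matrix (n × m) (n × m) ℂ) : Matrix n n ℂ :=
  Matrix.of fun i j => ∑ b, M (i, b) (j, b)

/-- The square root of a positive semidefinite matrix, as `Matrix.PosSemidef.sqrt` was defined
in Mathlib (Dec 2024); it has since been removed from Mathlib. -/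
noncomputable def Matrix.PosSemidef.sqrt {n 𝕜 : Type*} [Fintype n] [RCLike 𝕜] [DecidableEq n]
    {A : Matrix n n 𝕜} (hA : A.PosSemidef) : Matrix n n 𝕜 :=
  hA.1.eigenvectorUnitary.1 * diagonal ((↑) ∘ (√·) ∘ hA.1.eigenvalues) *
  (star hA.1.eigenvectorUnitary : Matrix n n 𝕜)

namespace Matrix.PosSemidef

open scoped MatrixOrder

variable {n 𝕜 : Type*} [Fintype n] [DecidableEq n] [RCLike 𝕜] {A : Matrix n n 𝕜}

lemma sqrt_eq_cfcSqrt (hA : A.PosSemidef) : hA.sqrt = CFC.sqrt A := by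
  rw [CFC.sqrt_eq_real_sqrt A hA.nonneg, cfcₙ_eq_cfc (hf0 := Real.sqrt_zero), hA.1.cfc_eq,
    IsHermitian.cfc, Unitary.conjStarAlgAut_apply]
  rfl

lemma posSemidef_sqrt (hA : A.PosSemidef) : hA.sqrt.PosSemidef := by
  rw [hA.sqrt_eq_cfcSqrt]
  exact (CFC.sqrt_nonneg A).posSemidef

lemma sqrt_mul_self (hA : A.PosSemidef) : hA.sqrt * hA.sqrt = A := by
  rw [hA.sqrt_eq_cfcSqrt]
  exact CFC.sqrt_mul_sqrt_self A hA.nonneg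

lemma eq_sqrt_of_mul_self_eq (hA : A.PosSemidef) {B : Matrix n n 𝕜} (hB : B.PosSemidef)
    (hBA : B * B = A) : B = hA.sqrt := by
  rw [hA.sqrt_eq_cfcSqrt]
  exact (CFC.sqrt_eq_iff A B hA.nonneg hB.nonneg).mpr hBA |>.symm

end Matrix.PosSemidef

lemma Matrix.PosDef.isUnit_det_sqrt {n 𝕜 : Type*} [Fintype n] [DecidableEq n] [RCLike 𝕜]
    {A : Matrix n n 𝕜} (hA : A.PosDef) : IsUnit hA.posSemidef.sqrt.det := by
  refine isUnit_of_mul_isUnit_left (y := hA.posSemidef.sqrt.det) ?_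
  rw [← det_mul, hA.posSemidef.sqrt_mul_self]
  exact (isUnit_iff_isUnit_det A).mp hA.isUnit

section SqrtKronecker

variable {n m 𝕜 : Type*} [Fintype n] [DecidableEq n] [Fintype m] [DecidableEq m] [RCLike 𝕜]

lemma Matrix.PosSemidef.sqrt_kronecker {A : Matrix n n 𝕜} {B : Matrix m m 𝕜}
    (hA : A.PosSemidef) (hB : B.PosSemidef) :
    hA.sqrt ⊗ₖ hB.sqrt = (hA.kronecker hB).sqrt :=
  (hA.kronecker hB).eq_sqrt_of_mul_self_eq (hA.posSemidef_sqrt.kronecker hB.posSemidef_sqrt) <| by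
    rw [← mul_kronecker_mul, hA.sqrt_mul_self, hB.sqrt_mul_self]

lemma Matrix.PosSemidef.unitary_mul_sqrt_mul_conjTranspose {A B U : Matrix n n 𝕜}
    (hA : A.PosSemidef) (hB : B.PosSemidef) (hU : U ∈ unitaryGroup n 𝕜)
    (hUAB : U * A * Uᴴ = B) :
    U * hA.sqrt * Uᴴ = hB.sqrt := by
  refine hB.eq_sqrt_of_mul_self_eq (hA.posSemidef_sqrt.mul_mul_conjTranspose_same U) ?_
  have hUU : Uᴴ * U = 1 := by simpa [star_eq_conjTranspose] using hU.1
  calc U * hA.sqrt * Uᴴ * (U * hA.sqrt * Uᴴ) = U * (hA.sqrt * (Uᴴ * U) * hA.sqrt) * Uᴴ := by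
        simp only [mul_assoc]
    _ = B := by rw [hUU, mul_one, hA.sqrt_mul_self, hUAB]

lemma unitary_mul_sqrt_kronecker_eq {α α' : Matrix n n 𝕜} {β β' : Matrix m m 𝕜}
    {U : Matrix (n × m) (n × m) 𝕜} (hU : U ∈ unitaryGroup (n × m) 𝕜)
    (hα : α.PosSemidef) (hα' : α'.PosSemidef) (hβ : β.PosSemidef) (hβ' : β'.PosSemidef)
    (hprod : U * (α ⊗ₖ β) * Uᴴ = α' ⊗ₖ β') :
    U * (hα.sqrt ⊗ₖ hβ.sqrt) = (hα'.sqrt ⊗ₖ hβ'.sqrt) * U := by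
  have hconj : U * (hα.sqrt ⊗ₖ hβ.sqrt) * Uᴴ = hα'.sqrt ⊗ₖ hβ'.sqrt := by
    rw [hα.sqrt_kronecker hβ, hα'.sqrt_kronecker hβ']
    exact (hα.kronecker hβ).unitary_mul_sqrt_mul_conjTranspose (hα'.kronecker hβ') hU hprod
  have hUU : Uᴴ * U = 1 := by simpa [star_eq_conjTranspose] using hU.1
  rw [← hconj, mul_assoc _ Uᴴ, hUU, mul_one]

lemma sqrt_kronecker_mul_conjTranspose_eq {α α' : Matrix n n 𝕜} {β β' : Matrix m m 𝕜}
    {U : Matrix (n × m) (n × m) 𝕜} (hU : U ∈ unitaryGroup (n × m) 𝕜)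
    (hα : α.PosSemidef) (hα' : α'.PosSemidef) (hβ : β.PosSemidef) (hβ' : β'.PosSemidef)
    (hprod : U * (α ⊗ₖ β) * Uᴴ = α' ⊗ₖ β') :
    (hα.sqrt ⊗ₖ hβ.sqrt) * Uᴴ = Uᴴ * (hα'.sqrt ⊗ₖ hβ'.sqrt) := by
  have hUU : Uᴴ * U = 1 := by simpa [star_eq_conjTranspose] using hU.1
  have hUU' : U * Uᴴ = 1 := by simpa [star_eq_conjTranspose] using hU.2
  calc (hα.sqrt ⊗ₖ hβ.sqrt) * Uᴴ = Uᴴ * (U * (hα.sqrt ⊗ₖ hβ.sqrt)) * Uᴴ := by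
        rw [← mul_assoc, hUU, one_mul]
    _ = Uᴴ * (hα'.sqrt ⊗ₖ hβ'.sqrt) := by
        rw [unitary_mul_sqrt_kronecker_eq hU hα hα' hβ hβ' hprod, mul_assoc, mul_assoc, hUU',
          mul_one]

end SqrtKronecker

section PartialTrace

variable {n m : Type*} [Fintype n] [Fintype m] [DecidableEq m]

lemma trB_kronecker_one_mul (A : Matrix n n ℂ) (M : Matrix (n × m) (n × m) ℂ) :
    trB ((A ⊗ₖ (1 : Matrix m m ℂ)) * M) = A * trB M := by
  ext i j
  simp only [trB, of_apply, mul_apply, kroneckerMap_apply, one_apply, Fintype.sum_prod_type,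
    mul_ite, mul_one, mul_zero, ite_mul, zero_mul, Finset.sum_ite_eq, Finset.mem_univ, if_true,
    Finset.mul_sum]
  exact Finset.sum_comm

lemma trB_mul_kronecker_one (A : Matrix n n ℂ) (M : Matrix (n × m) (n × m) ℂ) :
    trB (M * (A ⊗ₖ (1 : Matrix m m ℂ))) = trB M * A := by
  ext i j
  simp only [trB, of_apply, mul_apply, kroneckerMap_apply, one_apply, Fintype.sum_prod_type,
    mul_ite, mul_one, mul_zero, Finset.sum_ite_eq', Finset.mem_univ, if_true, Finset.sum_mul]
  exact Finset.sum_comm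

end PartialTrace

lemma mul_trB_conj_mul_eq_of_intertwines {n m : Type*} [Fintype n] [DecidableEq n] [Fintype m]
    [DecidableEq m] {U : Matrix (n × m) (n × m) ℂ} {a a' : Matrix n n ℂ} {b b' : Matrix m m ℂ}
    (ha' : IsUnit a'.det) (hU : U * (a ⊗ₖ b) = (a' ⊗ₖ b') * U)
    (hUH : (a ⊗ₖ b) * Uᴴ = Uᴴ * (a' ⊗ₖ b')) (ρ : Matrix n n ℂ) :
    a * trB ((1 ⊗ₖ b) * Uᴴ * ((a'⁻¹ * ρ * a'⁻¹) ⊗ₖ 1) * U * (1 ⊗ₖ b)) * a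
      = trB (Uᴴ * (ρ ⊗ₖ (b' * b')) * U) := by
  have hρ : a' * (a'⁻¹ * ρ * a'⁻¹) * a' = ρ := by
    rw [← mul_assoc, ← mul_assoc, mul_nonsing_inv _ ha', one_mul,
      nonsing_inv_mul_cancel_right _ _ ha']
  rw [← trB_kronecker_one_mul, ← trB_mul_kronecker_one]
  congr 1
  calc (a ⊗ₖ 1) * ((1 ⊗ₖ b) * Uᴴ * ((a'⁻¹ * ρ * a'⁻¹) ⊗ₖ 1) * U * (1 ⊗ₖ b)) * (a ⊗ₖ 1)
      = (a ⊗ₖ b) * Uᴴ * ((a'⁻¹ * ρ * a'⁻¹) ⊗ₖ 1) * (U * (a ⊗ₖ b)) := by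
        simp only [← mul_assoc, ← mul_kronecker_mul, mul_one, one_mul]
        simp only [mul_assoc, ← mul_kronecker_mul, mul_one, one_mul]
    _ = Uᴴ * ((a' ⊗ₖ b') * ((a'⁻¹ * ρ * a'⁻¹) ⊗ₖ 1) * (a' ⊗ₖ b')) * U := by
        rw [hUH, hU]
        simp only [mul_assoc]
    _ = Uᴴ * (ρ ⊗ₖ (b' * b')) * U := by
        rw [← mul_kronecker_mul, ← mul_kronecker_mul, hρ, mul_one]

theorem productPreserving_tabletopReversible_general
    {n m : Type*} [Fintype n] [DecidableEq n] [Fintype m] [DecidableEq m]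
    (U : Matrix (n × m) (n × m) ℂ) (hU : U ∈ Matrix.unitaryGroup (n × m) ℂ)
    (α α' : Matrix n n ℂ) (β β' : Matrix m m ℂ)
    (hα : α.PosDef) (hα' : α'.PosDef) (hβ : β.PosSemidef) (hβ' : β'.PosSemidef)
    (hprod : U * (α ⊗ₖ β) * Uᴴ = α' ⊗ₖ β') :
    ∀ ρ : Matrix n n ℂ,
      -- the Petz recovery map √α E†[(α')^{-1/2} ρ (α')^{-1/2}] √α
      hα.posSemidef.sqrt *
        trB (((1 : Matrix n n ℂ) ⊗ₖ hβ.sqrt) * Uᴴ *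
            (((hα'.posSemidef.sqrt)⁻¹ * ρ * (hα'.posSemidef.sqrt)⁻¹) ⊗ₖ (1 : Matrix m m ℂ)) *
            U * ((1 : Matrix n n ℂ) ⊗ₖ hβ.sqrt)) *
        hα.posSemidef.sqrt
      = trB (Uᴴ * (ρ ⊗ₖ β') * U) := by
  intro ρ
  conv_rhs => rw [← hβ'.sqrt_mul_self]
  exact mul_trB_conj_mul_eq_of_intertwines hα'.isUnit_det_sqrt
    (unitary_mul_sqrt_kronecker_eq hU hα.posSemidef hα'.posSemidef hβ hβ' hprod)
    (sqrt_kronecker_mul_conjTranspose_eq hU hα.posSemidef hα'.posSemidef hβ hβ' hprod) ρ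

/-- Product-preservation implies tabletop reversibility: if `U(α⊗β)U† = α'⊗β'`
with `α, α'` full-rank density operators, then the Petz recovery map of the
channel `E[ρ] = Tr_B[U(ρ⊗β)U†]` with reference `α` (note `E[α] = α'`) equals
`ρ ↦ Tr_B[U†(ρ⊗β')U]`. -/
theorem productPreserving_tabletopReversible
    {n m : Type*} [Fintype n] [DecidableEq n] [Fintype m] [DecidableEq m]
    (U : Matrix (n × m) (n × m) ℂ) (hU : U ∈ Matrix.unitaryGroup (n × m) ℂ)
    (α α' : Matrix n n ℂ) (β β' : Matrix m m ℂ)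
    (hα : α.PosDef) (hα' : α'.PosDef) (hβ : β.PosSemidef) (hβ' : β'.PosSemidef)
    (hαt : α.trace = 1) (hβt : β.trace = 1) (hα't : α'.trace = 1) (hβ't : β'.trace = 1)
    (hprod : U * (α ⊗ₖ β) * Uᴴ = α' ⊗ₖ β') :
    ∀ ρ : Matrix n n ℂ,
      -- the Petz recovery map √α E†[(α')^{-1/2} ρ (α')^{-1/2}] √α
      hα.posSemidef.sqrt *
        trB (((1 : Matrix n n ℂ) ⊗ₖ hβ.sqrt) * Uᴴ *
            (((hα'.posSemidef.sqrt)⁻¹ * ρ * (hα'.posSemidef.sqrt)⁻¹) ⊗ₖ (1 : Matrix m m ℂ)) *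
            U * ((1 : Matrix n n ℂ) ⊗ₖ hβ.sqrt)) *
        hα.posSemidef.sqrt
      = trB (Uᴴ * (ρ ⊗ₖ β') * U) :=
  productPreserving_tabletopReversible_general U hU α α' β β' hα hα' hβ hβ' hprod
end

section
/- (Every two-qubit unitary preserves some pure product state) For every unitary U on ℂ²⊗ℂ² and every unit vector |β⟩ ∈ ℂ², there exists a unit vector |α⟩ ∈ ℂ² and unit vectors |α'⟩, |β'⟩ such that U(|α⟩⊗|β⟩) = |α'⟩⊗|β'⟩ (up to global phase). -/
/-!
Identify `v ∈ ℂ² ⊗ ℂ²` with the `2 × 2` matrix `(v (i, j))`: `v` is a product vector exactly when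
this matrix has rank at most one, i.e. when the quadratic form `kronDet v` vanishes. For fixed `β`
the map `α ↦ U (α ⊗ β)` is linear, so `kronDet` pulls back to a binary quadratic form in `α`, which
has a nonzero root over `ℂ`. The root can be normalised because the condition is homogeneous, and
the image is then a unit product vector because `U` preserves norms.
-/

open Matrix

def vecKron (a b : Fin 2 → ℂ) : Fin 2 × Fin 2 → ℂ := fun p => a p.1 * b p.2

def IsUnitVec (v : Fin 2 → ℂ) : Prop := ∑ i, Complex.normSq (v i) = 1

lemma exists_ne_zero_quadratic_eq_zero {K : Type*} [Field K] [IsAlgClosed K] (A B C : K) :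
    ∃ x : Fin 2 → K, x ≠ 0 ∧ A * x 0 ^ 2 + B * x 0 * x 1 + C * x 1 ^ 2 = 0 := by
  by_cases hA : A = 0
  · exact ⟨![1, 0], by simp [funext_iff], by simp [hA]⟩
  obtain ⟨z, hz⟩ := IsAlgClosed.exists_root
    (Polynomial.C A * Polynomial.X ^ 2 + Polynomial.C B * Polynomial.X + Polynomial.C C)
    (by rw [Polynomial.degree_quadratic hA]; decide)
  refine ⟨![z, 1], by simp [funext_iff], ?_⟩
  simpa using hz

lemma sum_normSq_smul {ι : Type*} [Fintype ι] (c : ℂ) (v : ι → ℂ) :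
    ∑ i, Complex.normSq ((c • v) i) = Complex.normSq c * ∑ i, Complex.normSq (v i) := by
  simp [Complex.normSq_mul, Finset.mul_sum]

lemma exists_isUnitVec_smul {v : Fin 2 → ℂ} (hv : v ≠ 0) : ∃ c : ℂ, IsUnitVec (c • v) := by
  have hpos : 0 < ∑ i, Complex.normSq (v i) := by
    obtain ⟨i, hi⟩ := Function.ne_iff.mp hv
    exact Finset.sum_pos' (fun j _ => Complex.normSq_nonneg _) ⟨i, by simp, Complex.normSq_pos.mpr hi⟩
  refine ⟨(Real.sqrt (∑ i, Complex.normSq (v i)) : ℂ)⁻¹, ?_⟩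
  rw [IsUnitVec, sum_normSq_smul, Complex.normSq_inv, Complex.normSq_ofReal,
    Real.mul_self_sqrt hpos.le, inv_mul_cancel₀ hpos.ne']

lemma sum_normSq_vecKron (a b : Fin 2 → ℂ) :
    ∑ p, Complex.normSq (vecKron a b p) =
      (∑ i, Complex.normSq (a i)) * ∑ j, Complex.normSq (b j) := by
  simp only [vecKron, Complex.normSq_mul, Fintype.sum_prod_type, Finset.sum_mul_sum]

lemma vecKron_smul_smul_inv {c : ℂ} (hc : c ≠ 0) (a b : Fin 2 → ℂ) :
    vecKron (c • a) (c⁻¹ • b) = vecKron a b := by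
  ext p
  simp only [vecKron, Pi.smul_apply, smul_eq_mul]
  field_simp

lemma sum_normSq_mulVec_of_mem_unitaryGroup {n : Type*} [Fintype n] [DecidableEq n]
    {U : Matrix n n ℂ} (hU : U ∈ unitaryGroup n ℂ) (x : n → ℂ) :
    ∑ i, Complex.normSq ((U *ᵥ x) i) = ∑ i, Complex.normSq (x i) := by
  have sum_normSq_eq : ∀ w : n → ℂ, ((∑ i, Complex.normSq (w i) : ℝ) : ℂ) = star w ⬝ᵥ w := by
    intro w
    simp [dotProduct, Complex.normSq_eq_conj_mul_self]
  have hUx : star (U *ᵥ x) ⬝ᵥ (U *ᵥ x) = star x ⬝ᵥ x := by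
    rw [star_mulVec, ← dotProduct_mulVec, mulVec_mulVec, ← star_eq_conjTranspose,
      Unitary.star_mul_self_of_mem hU, one_mulVec]
  exact_mod_cast (sum_normSq_eq _).trans (hUx.trans (sum_normSq_eq x).symm)

def kronDet (v : Fin 2 × Fin 2 → ℂ) : ℂ := v (0, 0) * v (1, 1) - v (0, 1) * v (1, 0)

lemma kronDet_smul (c : ℂ) (v : Fin 2 × Fin 2 → ℂ) : kronDet (c • v) = c ^ 2 * kronDet v := by
  simp only [kronDet, Pi.smul_apply, smul_eq_mul]
  ring

lemma exists_ne_zero_kronDet_mulVec_eq_zero (W : Matrix (Fin 2 × Fin 2) (Fin 2) ℂ) :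
    ∃ x ≠ 0, kronDet (W *ᵥ x) = 0 := by
  obtain ⟨x, hx, hq⟩ := exists_ne_zero_quadratic_eq_zero
    (W (0, 0) 0 * W (1, 1) 0 - W (0, 1) 0 * W (1, 0) 0)
    (W (0, 0) 0 * W (1, 1) 1 + W (0, 0) 1 * W (1, 1) 0
      - W (0, 1) 0 * W (1, 0) 1 - W (0, 1) 1 * W (1, 0) 0)
    (W (0, 0) 1 * W (1, 1) 1 - W (0, 1) 1 * W (1, 0) 1)
  refine ⟨x, hx, ?_⟩
  simp only [kronDet, mulVec, dotProduct, Fin.sum_univ_two]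
  linear_combination hq

lemma mul_eq_mul_of_kronDet_eq_zero {v : Fin 2 × Fin 2 → ℂ} (hv : kronDet v = 0) (i j k l : Fin 2) :
    v (k, j) * v (i, l) = v (k, l) * v (i, j) := by
  rw [kronDet, sub_eq_zero] at hv
  fin_cases i <;> fin_cases j <;> fin_cases k <;> fin_cases l <;> simp <;>
    first | linear_combination hv | linear_combination -hv | linear_combination

lemma exists_vecKron_eq_of_kronDet_eq_zero {v : Fin 2 × Fin 2 → ℂ} (hv : kronDet v = 0)
    (hv0 : v ≠ 0) : ∃ a b, a ≠ 0 ∧ vecKron a b = v := by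
  obtain ⟨⟨i, j⟩, hij⟩ := Function.ne_iff.mp hv0
  refine ⟨fun k => v (k, j), fun l => v (i, l) / v (i, j), Function.ne_iff.mpr ⟨i, hij⟩, ?_⟩
  ext ⟨k, l⟩
  rw [vecKron, mul_div_assoc', div_eq_iff hij, mul_eq_mul_of_kronDet_eq_zero hv]

lemma exists_isUnitVec_vecKron_eq_of_kronDet_eq_zero {v : Fin 2 × Fin 2 → ℂ}
    (hv : kronDet v = 0) (hv1 : ∑ p, Complex.normSq (v p) = 1) :
    ∃ a b, IsUnitVec a ∧ IsUnitVec b ∧ vecKron a b = v := by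
  have hv0 : v ≠ 0 := by rintro rfl; simp at hv1
  obtain ⟨a, b, ha, rfl⟩ := exists_vecKron_eq_of_kronDet_eq_zero hv hv0
  obtain ⟨c, hc⟩ := exists_isUnitVec_smul ha
  have hc0 : c ≠ 0 := by rintro rfl; simp [IsUnitVec] at hc
  refine ⟨c • a, c⁻¹ • b, hc, ?_, vecKron_smul_smul_inv hc0 a b⟩
  rwa [← vecKron_smul_smul_inv hc0, sum_normSq_vecKron, hc, one_mul] at hv1

def kronRightMatrix (β : Fin 2 → ℂ) : Matrix (Fin 2 × Fin 2) (Fin 2) ℂ :=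
  of fun p k => if p.1 = k then β p.2 else 0

lemma kronRightMatrix_mulVec (α β : Fin 2 → ℂ) : kronRightMatrix β *ᵥ α = vecKron α β := by
  ext ⟨i, j⟩
  simp [kronRightMatrix, vecKron, mulVec, dotProduct, mul_comm]

/-- Every two-qubit unitary preserves some pure product state: for every unitary
`U` on `ℂ²⊗ℂ²` and every unit vector `|β⟩`, there exist unit vectors `|α⟩`,
`|α'⟩`, `|β'⟩` with `U(|α⟩⊗|β⟩) = |α'⟩⊗|β'⟩`. -/
theorem two_qubit_unitary_preserves_some_product
    (U : Matrix (Fin 2 × Fin 2) (Fin 2 × Fin 2) ℂ)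
    (hU : U ∈ Matrix.unitaryGroup (Fin 2 × Fin 2) ℂ)
    (β : Fin 2 → ℂ) (hβ : IsUnitVec β) :
    ∃ α α' β' : Fin 2 → ℂ, IsUnitVec α ∧ IsUnitVec α' ∧ IsUnitVec β' ∧
      U.mulVec (vecKron α β) = vecKron α' β' := by
  obtain ⟨x, hx, hdet⟩ := exists_ne_zero_kronDet_mulVec_eq_zero (U * kronRightMatrix β)
  obtain ⟨c, hα⟩ := exists_isUnitVec_smul hx
  have hdet' : kronDet (U *ᵥ vecKron (c • x) β) = 0 := by
    rw [← kronRightMatrix_mulVec, mulVec_mulVec, mulVec_smul, kronDet_smul, hdet, mul_zero]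
  have hnorm : ∑ p, Complex.normSq ((U *ᵥ vecKron (c • x) β) p) = 1 := by
    rw [sum_normSq_mulVec_of_mem_unitaryGroup hU, sum_normSq_vecKron, hα, hβ, one_mul]
  obtain ⟨α', β', hα', hβ', hv⟩ := exists_isUnitVec_vecKron_eq_of_kronDet_eq_zero hdet' hnorm
  exact ⟨c • x, α', β', hα, hα', hβ', hv.symm⟩
end

section
/- (Local energy conservation for generalized thermal unitaries, nondegenerate qubit case) Let H_A = ω_A(|α₊⟩⟨α₊| − |α₋⟩⟨α₋|) and H_B = ω_B(|β₊⟩⟨β₊| − |β₋⟩⟨β₋|) with ω_A, ω_B > 0 and orthonormal {|α_±⟩}, {|β_±⟩}. If U(H_A⊗𝟙 + 𝟙⊗H_B)U† = H_A'⊗𝟙 + 𝟙⊗H_B' with H_A', H_B' Hermitian, then the pure product states obtained from the extreme-temperature limits are preserved: U(|α₊⟩⊗|β₊⟩) and U(|α₋⟩⊗|β₋⟩) are both product vectors. -/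
/-! Write `w ∈ ℂ² ⊗ ℂ²` as `vec X` for a `2 × 2` matrix `X`: then `w` is a product vector as
soon as `det X = 0`, and `(A ⊗ 𝟙 + 𝟙 ⊗ B) w = μ w` reads `X Aᵀ + B X = μ X`. If `X` were
invertible, `Aᵀ + X⁻¹ B X = μ • 1` and taking traces would give `tr A + tr B = 2μ`. Now
`H = H_A ⊗ 𝟙 + 𝟙 ⊗ H_B` is traceless, so `tr H_A' + tr H_B' = 0`, while `U(|α±⟩⊗|β±⟩)` are
eigenvectors of `U H U† = H_A' ⊗ 𝟙 + 𝟙 ⊗ H_B'` for the nonzero eigenvalues `±(ω_A + ω_B)`. -/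

open Matrix Kronecker

/-- The rank-one projector `|v⟩⟨v|` on `ℂ²`. -/
def projVec (v : Fin 2 → ℂ) : Matrix (Fin 2) (Fin 2) ℂ :=
  Matrix.of fun i j => v i * (starRingEnd ℂ) (v j)

/-- A bipartite vector is a product vector. -/
def IsProductVec (c : Fin 2 × Fin 2 → ℂ) : Prop :=
  ∃ a b : Fin 2 → ℂ, ∀ p, c p = a p.1 * b p.2

theorem Matrix.trace_kroneckerSum {m n R : Type*} [Fintype m] [Fintype n] [DecidableEq m]
    [DecidableEq n] [Semiring R] (A : Matrix m m R) (B : Matrix n n R) :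
    (A ⊗ₖ (1 : Matrix n n R) + (1 : Matrix m m R) ⊗ₖ B).trace
      = A.trace * Fintype.card n + Fintype.card m * B.trace := by
  rw [trace_add, trace_kronecker, trace_kronecker, trace_one, trace_one]

theorem Matrix.trace_add_trace_eq_of_kroneckerSum_mulVec_vec {n R : Type*} [Fintype n]
    [DecidableEq n] [CommRing R] (A B X : Matrix n n R) (hX : IsUnit X.det) (μ : R)
    (h : (A ⊗ₖ (1 : Matrix n n R) + (1 : Matrix n n R) ⊗ₖ B) *ᵥ vec X = μ • vec X) :
    A.trace + B.trace = Fintype.card n * μ := by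
  rw [add_mulVec, kronecker_mulVec_vec, kronecker_mulVec_vec, ← vec_smul, ← vec_add,
    vec_inj, Matrix.one_mul, transpose_one, Matrix.mul_one] at h
  have hconj : Aᵀ + X⁻¹ * B * X = μ • 1 := by
    calc Aᵀ + X⁻¹ * B * X = X⁻¹ * (X * Aᵀ + B * X) := by
          rw [Matrix.mul_add, ← Matrix.mul_assoc, nonsing_inv_mul X hX, Matrix.one_mul,
            Matrix.mul_assoc]
      _ = μ • 1 := by rw [h, Matrix.mul_smul, nonsing_inv_mul X hX]
  have := congrArg trace hconj
  rwa [trace_add, trace_transpose, trace_mul_cycle, mul_nonsing_inv X hX, Matrix.one_mul,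
    trace_smul, trace_one, smul_eq_mul, mul_comm] at this

theorem Matrix.mul_eq_mul_of_det_fin_two_eq_zero {R : Type*} [CommRing R]
    {X : Matrix (Fin 2) (Fin 2) R} (h : X.det = 0) (i j k l : Fin 2) :
    X i j * X k l = X i l * X k j := by
  rw [det_fin_two] at h
  fin_cases i <;> fin_cases j <;> fin_cases k <;> fin_cases l <;> simp <;>
    first | ring | linear_combination h | linear_combination -h

theorem isProductVec_vec_of_det_eq_zero {X : Matrix (Fin 2) (Fin 2) ℂ} (h : X.det = 0) :
    IsProductVec (vec X) := by
  by_cases hX : X = 0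
  · exact ⟨0, 0, fun p => by simp [hX]⟩
  obtain ⟨k, l, hkl⟩ : ∃ k l, X k l ≠ 0 := by
    by_contra! h0
    exact hX (Matrix.ext h0)
  refine ⟨fun j => X k j / X k l, fun i => X i l, fun ⟨j, i⟩ => ?_⟩
  rw [vec, div_mul_eq_mul_div, eq_div_iff hkl, mul_eq_mul_of_det_fin_two_eq_zero h]
  exact mul_comm _ _

theorem isProductVec_of_kroneckerSum_mulVec_eq_smul (A B : Matrix (Fin 2) (Fin 2) ℂ)
    {w : Fin 2 × Fin 2 → ℂ} {μ : ℂ} (hμ : A.trace + B.trace ≠ 2 * μ)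
    (hw : (A ⊗ₖ (1 : Matrix (Fin 2) (Fin 2) ℂ) + (1 : Matrix (Fin 2) (Fin 2) ℂ) ⊗ₖ B) *ᵥ w
      = μ • w) :
    IsProductVec w := by
  set X : Matrix (Fin 2) (Fin 2) ℂ := of fun i j => w (j, i)
  change IsProductVec (vec X)
  refine isProductVec_vec_of_det_eq_zero (by_contra fun hdet => hμ ?_)
  simpa using
    trace_add_trace_eq_of_kroneckerSum_mulVec_vec A B X (isUnit_iff_ne_zero.mpr hdet) μ hw

theorem isProductVec_mulVec_of_conj_eq_kroneckerSum
    {U : Matrix (Fin 2 × Fin 2) (Fin 2 × Fin 2) ℂ} (hU : U ∈ unitaryGroup (Fin 2 × Fin 2) ℂ)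
    {H : Matrix (Fin 2 × Fin 2) (Fin 2 × Fin 2) ℂ} {A B : Matrix (Fin 2) (Fin 2) ℂ}
    (hconj : U * H * Uᴴ
      = A ⊗ₖ (1 : Matrix (Fin 2) (Fin 2) ℂ) + (1 : Matrix (Fin 2) (Fin 2) ℂ) ⊗ₖ B)
    (htr : H.trace = 0) {v : Fin 2 × Fin 2 → ℂ} {μ : ℂ} (hμ : μ ≠ 0) (hv : H *ᵥ v = μ • v) :
    IsProductVec (U *ᵥ v) := by
  have hUU : Uᴴ * U = 1 := mem_unitaryGroup_iff'.mp hU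
  have htrAB : A.trace + B.trace = 0 := by
    have := congrArg trace hconj
    rw [trace_mul_cycle, hUU, Matrix.one_mul, htr, trace_kroneckerSum] at this
    simp only [Fintype.card_fin, Nat.cast_ofNat] at this
    linear_combination -this / 2
  refine isProductVec_of_kroneckerSum_mulVec_eq_smul A B
    (by rw [htrAB]; exact (mul_ne_zero two_ne_zero hμ).symm) ?_
  rw [← hconj, mulVec_mulVec, Matrix.mul_assoc, Matrix.mul_assoc, hUU, Matrix.mul_one,
    ← mulVec_mulVec, hv, mulVec_smul]

theorem kronecker_mulVec_vecKron (P Q : Matrix (Fin 2) (Fin 2) ℂ) (x y : Fin 2 → ℂ) :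
    (P ⊗ₖ Q) *ᵥ vecKron x y = vecKron (P *ᵥ x) (Q *ᵥ y) := by
  funext p
  simp only [mulVec, dotProduct, vecKron, kroneckerMap_apply, Fintype.sum_prod_type,
    Finset.sum_mul_sum]
  exact Finset.sum_congr rfl fun i _ => Finset.sum_congr rfl fun j _ => by ring

theorem kroneckerSum_mulVec_vecKron {A B : Matrix (Fin 2) (Fin 2) ℂ} {x y : Fin 2 → ℂ}
    {s t : ℂ} (hx : A *ᵥ x = s • x) (hy : B *ᵥ y = t • y) :
    (A ⊗ₖ (1 : Matrix (Fin 2) (Fin 2) ℂ) + (1 : Matrix (Fin 2) (Fin 2) ℂ) ⊗ₖ B) *ᵥ vecKron x y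
      = (s + t) • vecKron x y := by
  rw [add_mulVec, kronecker_mulVec_vecKron, kronecker_mulVec_vecKron, one_mulVec, one_mulVec,
    hx, hy]
  funext p
  simp only [vecKron, Pi.add_apply, Pi.smul_apply, smul_eq_mul]
  ring

theorem projVec_mulVec (u v : Fin 2 → ℂ) :
    projVec u *ᵥ v = (∑ j, (starRingEnd ℂ) (u j) * v j) • u := by
  funext i
  simp only [mulVec, dotProduct, projVec, of_apply, Pi.smul_apply, smul_eq_mul, Finset.sum_mul]
  exact Finset.sum_congr rfl fun j _ => by ring

theorem sum_conj_mul_self_eq_one {u : Fin 2 → ℂ} (hu : ∑ i, Complex.normSq (u i) = 1) :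
    ∑ i, (starRingEnd ℂ) (u i) * u i = 1 := by
  simp only [← Complex.normSq_eq_conj_mul_self]
  exact_mod_cast hu

theorem trace_projVec {u : Fin 2 → ℂ} (hu : ∑ i, Complex.normSq (u i) = 1) :
    (projVec u).trace = 1 := by
  simp only [trace, diag, projVec, of_apply, mul_comm (u _)]
  exact sum_conj_mul_self_eq_one hu

section TwoLevel

variable {u v : Fin 2 → ℂ} (hu : ∑ i, Complex.normSq (u i) = 1)
  (hv : ∑ i, Complex.normSq (v i) = 1) (huv : ∑ i, (starRingEnd ℂ) (u i) * v i = 0) (ω : ℝ)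

include hu hv in
theorem trace_smul_projVec_sub_projVec : ((ω : ℂ) • (projVec u - projVec v)).trace = 0 := by
  rw [trace_smul, trace_sub, trace_projVec hu, trace_projVec hv, sub_self, smul_zero]

include hu huv in
theorem smul_projVec_sub_projVec_mulVec_left :
    ((ω : ℂ) • (projVec u - projVec v)) *ᵥ u = (ω : ℂ) • u := by
  have hvu : ∑ i, (starRingEnd ℂ) (v i) * u i = 0 := by
    simpa [map_sum, mul_comm] using congrArg (starRingEnd ℂ) huv
  rw [smul_mulVec, sub_mulVec, projVec_mulVec, projVec_mulVec, sum_conj_mul_self_eq_one hu, hvu,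
    one_smul, zero_smul, sub_zero]

include hv huv in
theorem smul_projVec_sub_projVec_mulVec_right :
    ((ω : ℂ) • (projVec u - projVec v)) *ᵥ v = (-ω : ℂ) • v := by
  rw [smul_mulVec, sub_mulVec, projVec_mulVec, projVec_mulVec, sum_conj_mul_self_eq_one hv, huv,
    one_smul, zero_smul, zero_sub, smul_neg, neg_smul]

end TwoLevel

theorem generalizedThermal_preserves_extreme_products_general
    (U : Matrix (Fin 2 × Fin 2) (Fin 2 × Fin 2) ℂ)
    (hU : U ∈ Matrix.unitaryGroup (Fin 2 × Fin 2) ℂ)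
    (αp αm βp βm : Fin 2 → ℂ)
    (hαp : ∑ i, Complex.normSq (αp i) = 1) (hαm : ∑ i, Complex.normSq (αm i) = 1)
    (hβp : ∑ i, Complex.normSq (βp i) = 1) (hβm : ∑ i, Complex.normSq (βm i) = 1)
    (hαorth : ∑ i, (starRingEnd ℂ) (αp i) * αm i = 0)
    (hβorth : ∑ i, (starRingEnd ℂ) (βp i) * βm i = 0)
    (ωA ωB : ℝ) (hωA : 0 < ωA) (hωB : 0 < ωB)
    (HA' HB' : Matrix (Fin 2) (Fin 2) ℂ)
    (hGT : U * (((ωA : ℂ) • (projVec αp - projVec αm)) ⊗ₖ (1 : Matrix (Fin 2) (Fin 2) ℂ)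
        + (1 : Matrix (Fin 2) (Fin 2) ℂ) ⊗ₖ ((ωB : ℂ) • (projVec βp - projVec βm))) * Uᴴ
      = HA' ⊗ₖ (1 : Matrix (Fin 2) (Fin 2) ℂ) + (1 : Matrix (Fin 2) (Fin 2) ℂ) ⊗ₖ HB') :
    IsProductVec (U.mulVec (vecKron αp βp)) ∧ IsProductVec (U.mulVec (vecKron αm βm)) := by
  have htr := trace_kroneckerSum ((ωA : ℂ) • (projVec αp - projVec αm))
    ((ωB : ℂ) • (projVec βp - projVec βm))
  rw [trace_smul_projVec_sub_projVec hαp hαm, trace_smul_projVec_sub_projVec hβp hβm,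
    zero_mul, mul_zero, add_zero] at htr
  have hsum : (ωA + ωB : ℂ) ≠ 0 := by exact_mod_cast (add_pos hωA hωB).ne'
  constructor
  · exact isProductVec_mulVec_of_conj_eq_kroneckerSum hU hGT htr hsum <|
      kroneckerSum_mulVec_vecKron (smul_projVec_sub_projVec_mulVec_left hαp hαorth ωA)
        (smul_projVec_sub_projVec_mulVec_left hβp hβorth ωB)
  · exact isProductVec_mulVec_of_conj_eq_kroneckerSum hU hGT htr
      (by rw [← neg_add]; exact neg_ne_zero.mpr hsum) <|
      kroneckerSum_mulVec_vecKron (smul_projVec_sub_projVec_mulVec_right hαm hαorth ωA)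
        (smul_projVec_sub_projVec_mulVec_right hβm hβorth ωB)

/-- Local energy conservation for generalized thermal two-qubit unitaries
(nondegenerate case): with `H_A = ω_A(|α₊⟩⟨α₊| − |α₋⟩⟨α₋|)`,
`H_B = ω_B(|β₊⟩⟨β₊| − |β₋⟩⟨β₋|)`, `ω_A, ω_B > 0` and orthonormal `{|α_±⟩}`,
`{|β_±⟩}`, if `U(H_A⊗𝟙 + 𝟙⊗H_B)U† = H_A'⊗𝟙 + 𝟙⊗H_B'` with `H_A', H_B'`
Hermitian, then `U(|α₊⟩⊗|β₊⟩)` and `U(|α₋⟩⊗|β₋⟩)` are product vectors. -/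
theorem generalizedThermal_preserves_extreme_products
    (U : Matrix (Fin 2 × Fin 2) (Fin 2 × Fin 2) ℂ)
    (hU : U ∈ Matrix.unitaryGroup (Fin 2 × Fin 2) ℂ)
    (αp αm βp βm : Fin 2 → ℂ)
    (hαp : ∑ i, Complex.normSq (αp i) = 1) (hαm : ∑ i, Complex.normSq (αm i) = 1)
    (hβp : ∑ i, Complex.normSq (βp i) = 1) (hβm : ∑ i, Complex.normSq (βm i) = 1)
    (hαorth : ∑ i, (starRingEnd ℂ) (αp i) * αm i = 0)
    (hβorth : ∑ i, (starRingEnd ℂ) (βp i) * βm i = 0)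
    (ωA ωB : ℝ) (hωA : 0 < ωA) (hωB : 0 < ωB)
    (HA' HB' : Matrix (Fin 2) (Fin 2) ℂ)
    (hHA' : HA'.IsHermitian) (hHB' : HB'.IsHermitian)
    (hGT : U * (((ωA : ℂ) • (projVec αp - projVec αm)) ⊗ₖ (1 : Matrix (Fin 2) (Fin 2) ℂ)
        + (1 : Matrix (Fin 2) (Fin 2) ℂ) ⊗ₖ ((ωB : ℂ) • (projVec βp - projVec βm))) * Uᴴ
      = HA' ⊗ₖ (1 : Matrix (Fin 2) (Fin 2) ℂ) + (1 : Matrix (Fin 2) (Fin 2) ℂ) ⊗ₖ HB') :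
    IsProductVec (U.mulVec (vecKron αp βp)) ∧ IsProductVec (U.mulVec (vecKron αm βm)) :=
  generalizedThermal_preserves_extreme_products_general U hU αp αm βp βm hαp hαm hβp hβm hαorth
    hβorth ωA ωB hωA hωB HA' HB' hGT
end
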